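/- Let ω ∈ 𝓑'₀ have power series expansion ω(z) = c₁z + c₂z² + c₃z³ + ⋯ on 𝔻, let μ ∈ ℂ, and suppose |μ| ≤ (4/3)·|c₁|/(1 + |c₁|). Then |c₁c₃ − μc₂²| ≤ (1/3)·|c₁|·(1 − |c₁|²). -/

import Mathlib

/-!
`f = ω'` maps the unit disc into its closure and `f = c₁ + 2c₂z + 3c₃z² + ⋯`. One step of Schur's
algorithm writes `f = f 0 + z g (1 - conj (f 0) f)`, where `g` is the slope at `0` of the Möbius
transform `(f - f 0) / (1 - conj (f 0) f)` and so, by the Schwarz lemma, again maps the disc into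
its closure. The Schwarz–Pick bound `|g'(0)| ≤ 1 - |g(0)|²` then gives Schur's inequality
`|3c₃(1 - |c₁|²) + 4 conj c₁ c₂²| ≤ (1 - |c₁|²)² - 4|c₂|²`. Writing
`3(1 - |c₁|²)(c₁c₃ - μc₂²) = c₁ (3c₃(1 - |c₁|²) + 4 conj c₁ c₂²) - (4|c₁|² + 3(1 - |c₁|²)μ) c₂²`,
the triangle inequality reduces the claim to `3(1 - |c₁|²)|μ| ≤ 4|c₁|(1 - |c₁|)`, which is the
hypothesis on `μ`. If `|c₁| = 1`, then `f` is constant by the maximum principle.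
-/

open Complex Metric ComplexConjugate Set Filter Topology FormalMultilinearSeries
open scoped Nat NNReal

theorem hasFPowerSeriesOnBall_ofScalars_of_hasSum {f : ℂ → ℂ} {a : ℕ → ℂ} {r : ℝ≥0}
    (hr : 0 < r) (h : ∀ z ∈ ball (0 : ℂ) r, HasSum (fun n ↦ a n * z ^ n) (f z)) :
    HasFPowerSeriesOnBall f (ofScalars ℂ a) 0 r where
  r_le := by
    refine ENNReal.le_of_forall_nnreal_lt fun ρ hρ ↦ ?_
    have hρ' : ((ρ : ℝ) : ℂ) ∈ ball (0 : ℂ) r := by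
      simpa [abs_of_nonneg ρ.coe_nonneg] using hρ
    refine (ofScalars ℂ a).le_radius_of_tendsto (l := 0) ?_
    simpa [ofScalars_norm, abs_of_nonneg ρ.coe_nonneg] using
      (h _ hρ').summable.tendsto_atTop_zero.norm
  r_pos := by simpa using hr
  hasSum {z} hz := by
    have hz' : z ∈ ball (0 : ℂ) r := by simpa [edist_eq_enorm_sub, ← ofReal_norm] using hz
    simpa [ofScalars_apply_eq, mul_comm] using h z hz'

theorem HasFPowerSeriesAt.iteratedDeriv_eq_factorial_mul {𝕜 : Type*} [NontriviallyNormedField 𝕜]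
    [CompleteSpace 𝕜] [CharZero 𝕜] {f : 𝕜 → 𝕜} {a : ℕ → 𝕜} {x : 𝕜}
    (hf : HasFPowerSeriesAt f (ofScalars 𝕜 a) x) (n : ℕ) :
    iteratedDeriv n f x = n ! * a n := by
  have := congrFun (ofScalars_series_injective 𝕜 𝕜
    (hf.analyticAt.hasFPowerSeriesAt.eq_formalMultilinearSeries hf)) n
  rw [← this, mul_div_cancel₀ _ (Nat.cast_ne_zero.mpr n.factorial_ne_zero)]

theorem one_sub_conj_mul_self (a : ℂ) : 1 - conj a * a = ((1 - ‖a‖ ^ 2 : ℝ) : ℂ) := by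
  rw [conj_mul']
  push_cast
  rfl

theorem one_sub_conj_mul_ne_zero {a w : ℂ} (ha : ‖a‖ < 1) (hw : ‖w‖ ≤ 1) :
    1 - conj a * w ≠ 0 := by
  have : ‖conj a * w‖ < 1 := by
    rw [norm_mul, norm_conj]
    nlinarith [norm_nonneg a, norm_nonneg w]
  exact sub_ne_zero.mpr fun h ↦ by simp [← h] at this

theorem norm_sub_le_norm_one_sub_conj_mul {a w : ℂ} (ha : ‖a‖ ≤ 1) (hw : ‖w‖ ≤ 1) :
    ‖w - a‖ ≤ ‖1 - conj a * w‖ := by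
  have key : normSq (1 - conj a * w) - normSq (w - a) = (1 - normSq a) * (1 - normSq w) := by
    simp only [normSq_apply, sub_re, sub_im, mul_re, mul_im, conj_re, conj_im, one_re, one_im]
    ring
  have ha' : normSq a ≤ 1 := by rw [normSq_eq_norm_sq]; nlinarith [norm_nonneg a]
  have hw' : normSq w ≤ 1 := by rw [normSq_eq_norm_sq]; nlinarith [norm_nonneg w]
  rw [← sq_le_sq₀ (norm_nonneg _) (norm_nonneg _), ← normSq_eq_norm_sq, ← normSq_eq_norm_sq]
  nlinarith

theorem deriv_eq_of_eventually_eq_add_sub_mul {𝕜 : Type*} [NontriviallyNormedField 𝕜]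
    {F G : 𝕜 → 𝕜} {c : 𝕜} (hG : DifferentiableAt 𝕜 G c)
    (hFG : ∀ᶠ z in 𝓝 c, F z = F c + (z - c) * G z) : deriv F c = G c := by
  have h := (((hasDerivAt_id c).sub_const c).mul hG.hasDerivAt).const_add (F c)
  simpa using (h.congr_of_eventuallyEq hFG).deriv

theorem deriv_deriv_eq_of_eventually_eq_add_sub_mul {𝕜 : Type*} [NontriviallyNormedField 𝕜]
    [CompleteSpace 𝕜] {F G : 𝕜 → 𝕜} {c : 𝕜} (hG : AnalyticAt 𝕜 G c)
    (hFG : ∀ᶠ z in 𝓝 c, F z = F c + (z - c) * G z) : deriv (deriv F) c = 2 * deriv G c := by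
  have hF' : deriv F =ᶠ[𝓝 c] fun z ↦ G z + (z - c) * deriv G z := by
    filter_upwards [hFG.eventually_nhds, hG.eventually_analyticAt] with z hz hGz
    have h := (((hasDerivAt_id z).sub_const c).mul hGz.differentiableAt.hasDerivAt).const_add (F c)
    simpa using (h.congr_of_eventuallyEq hz).deriv
  have h := hG.differentiableAt.hasDerivAt.add
    (((hasDerivAt_id c).sub_const c).mul hG.deriv.differentiableAt.hasDerivAt)
  rw [(h.congr_of_eventuallyEq hF').deriv]
  simp only [one_mul, id_eq, sub_self, zero_mul, add_zero]
  ring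

theorem eventuallyEq_const_of_norm_eq_one {f : ℂ → ℂ} (hd : DifferentiableOn ℂ f (ball 0 1))
    (hf : MapsTo f (ball 0 1) (closedBall 0 1)) (h1 : ‖f 0‖ = 1) :
    f =ᶠ[𝓝 0] fun _ ↦ f 0 := by
  have hmax : IsMaxOn (‖f ·‖) (ball 0 1) 0 := fun z hz ↦ by
    simpa [h1] using hf hz
  exact eventually_of_mem (ball_mem_nhds 0 one_pos)
    (eqOn_of_isPreconnected_of_isMaxOn_norm (convex_ball 0 1).isPreconnected isOpen_ball hd
      (mem_ball_self one_pos) hmax)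

theorem exists_schur_transform {f : ℂ → ℂ} (hd : DifferentiableOn ℂ f (ball 0 1))
    (hf : MapsTo f (ball 0 1) (closedBall 0 1)) (h0 : ‖f 0‖ < 1) :
    ∃ g : ℂ → ℂ, DifferentiableOn ℂ g (ball 0 1) ∧ MapsTo g (ball 0 1) (closedBall 0 1) ∧
      ∀ z ∈ ball (0 : ℂ) 1, f z = f 0 + z * (g z * (1 - conj (f 0) * f z)) := by
  set a := f 0
  have hden : ∀ z ∈ ball (0 : ℂ) 1, 1 - conj a * f z ≠ 0 := fun z hz ↦
    one_sub_conj_mul_ne_zero h0 (mem_closedBall_zero_iff.mp (hf hz))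
  set h : ℂ → ℂ := fun z ↦ (f z - a) / (1 - conj a * f z)
  have hh0 : h 0 = 0 := by simp [h, a]
  have hhd : DifferentiableOn ℂ h (ball 0 1) :=
    (hd.sub_const a).div ((differentiableOn_const 1).sub (hd.const_mul _)) hden
  have hh : MapsTo h (ball 0 1) (closedBall (h 0) 1) := fun z hz ↦ by
    rw [hh0, mem_closedBall_zero_iff, norm_div, div_le_one (norm_pos_iff.mpr (hden z hz))]
    exact norm_sub_le_norm_one_sub_conj_mul h0.le (mem_closedBall_zero_iff.mp (hf hz))
  refine ⟨dslope h 0, (differentiableOn_dslope (ball_mem_nhds 0 one_pos)).mpr hhd,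
    fun z hz ↦ mem_closedBall_zero_iff.mpr (by
      simpa using Complex.norm_dslope_le_div_of_mapsTo_ball hhd hh hz), fun z hz ↦ ?_⟩
  have hzg : z * dslope h 0 z = h z := by simpa [hh0] using sub_smul_dslope h 0 z
  rw [← mul_assoc, hzg, div_mul_cancel₀ _ (hden z hz)]
  ring

theorem norm_deriv_le_one_sub_norm_sq {f : ℂ → ℂ} (hd : DifferentiableOn ℂ f (ball 0 1))
    (hf : MapsTo f (ball 0 1) (closedBall 0 1)) : ‖deriv f 0‖ ≤ 1 - ‖f 0‖ ^ 2 := by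
  have h0 : (0 : ℂ) ∈ ball (0 : ℂ) 1 := mem_ball_self one_pos
  have hball : ball (0 : ℂ) 1 ∈ 𝓝 0 := ball_mem_nhds 0 one_pos
  rcases (mem_closedBall_zero_iff.mp (hf h0)).lt_or_eq with hlt | heq
  · obtain ⟨g, hgd, hg, hfg⟩ := exists_schur_transform hd hf hlt
    have hderiv : deriv f 0 = g 0 * (1 - conj (f 0) * f 0) :=
      deriv_eq_of_eventually_eq_add_sub_mul
        ((hgd.differentiableAt hball).mul (((hd.differentiableAt hball).const_mul _).const_sub 1))
        (eventually_of_mem hball fun z hz ↦ by simpa using hfg z hz)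
    have hδ : 0 ≤ 1 - ‖f 0‖ ^ 2 := by nlinarith [norm_nonneg (f 0)]
    rw [hderiv, one_sub_conj_mul_self, norm_mul, norm_real, Real.norm_of_nonneg hδ]
    exact mul_le_of_le_one_left hδ (mem_closedBall_zero_iff.mp (hg h0))
  · rw [(eventuallyEq_const_of_norm_eq_one hd hf heq).deriv_eq, heq]
    simp

theorem norm_deriv_deriv_div_two_mul_add_conj_mul_sq_le {f : ℂ → ℂ}
    (hd : DifferentiableOn ℂ f (ball 0 1)) (hf : MapsTo f (ball 0 1) (closedBall 0 1))
    (h0 : ‖f 0‖ < 1) :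
    ‖deriv (deriv f) 0 / 2 * (1 - ‖f 0‖ ^ 2 : ℝ) + conj (f 0) * deriv f 0 ^ 2‖ ≤
      (1 - ‖f 0‖ ^ 2) ^ 2 - ‖deriv f 0‖ ^ 2 := by
  obtain ⟨g, hgd, hg, hfg⟩ := exists_schur_transform hd hf h0
  have hball : ball (0 : ℂ) 1 ∈ 𝓝 0 := ball_mem_nhds 0 one_pos
  set a := f 0
  set δ : ℝ := 1 - ‖a‖ ^ 2
  have hδ : 0 ≤ δ := by nlinarith [norm_nonneg a]
  set G : ℂ → ℂ := fun z ↦ g z * (1 - conj a * f z)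
  have hGa : AnalyticAt ℂ G 0 :=
    (hgd.analyticAt hball).mul (analyticAt_const.sub (analyticAt_const.mul (hd.analyticAt hball)))
  have hFG : ∀ᶠ z in 𝓝 0, f z = f 0 + (z - 0) * G z :=
    eventually_of_mem hball fun z hz ↦ by simpa using hfg z hz
  have h1 : deriv f 0 = g 0 * δ := by
    rw [deriv_eq_of_eventually_eq_add_sub_mul hGa.differentiableAt hFG, ← one_sub_conj_mul_self]
  have hG' : deriv G 0 = deriv g 0 * δ - conj a * g 0 * deriv f 0 := by
    have h := (hgd.differentiableAt hball).hasDerivAt.fun_mul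
      (((hd.differentiableAt hball).hasDerivAt.const_mul (conj a)).const_sub 1)
    rw [h.deriv, one_sub_conj_mul_self]
    ring
  have h2 : deriv (deriv f) 0 / 2 * δ + conj a * deriv f 0 ^ 2 = deriv g 0 * δ ^ 2 := by
    rw [deriv_deriv_eq_of_eventually_eq_add_sub_mul hGa hFG, hG', h1]
    ring
  have hg' : ‖deriv g 0‖ ≤ 1 - ‖g 0‖ ^ 2 := norm_deriv_le_one_sub_norm_sq hgd hg
  rw [h2, h1, norm_mul, norm_mul, norm_pow, norm_real, Real.norm_of_nonneg hδ]
  nlinarith [mul_le_mul_of_nonneg_right hg' (sq_nonneg δ)]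

theorem norm_mul_sub_mul_sq_le {a₁ a₂ a₃ μ : ℂ} (ha₁ : ‖a₁‖ < 1)
    (hμ : ‖μ‖ ≤ 4 / 3 * ‖a₁‖ / (1 + ‖a₁‖))
    (h : ‖3 * a₃ * (1 - ‖a₁‖ ^ 2 : ℝ) + conj a₁ * (2 * a₂) ^ 2‖ ≤
      (1 - ‖a₁‖ ^ 2) ^ 2 - ‖2 * a₂‖ ^ 2) :
    ‖a₁ * a₃ - μ * a₂ ^ 2‖ ≤ 1 / 3 * ‖a₁‖ * (1 - ‖a₁‖ ^ 2) := by
  set A := ‖a₁‖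
  set δ : ℝ := 1 - A ^ 2
  have hA : 0 ≤ A := norm_nonneg a₁
  have hδ : 0 < δ := by nlinarith
  set X := 3 * a₃ * δ + conj a₁ * (2 * a₂) ^ 2
  have hX : ‖X‖ ≤ δ ^ 2 - 4 * ‖a₂‖ ^ 2 := by
    rw [norm_mul, mul_pow, Complex.norm_two] at h
    linarith
  have hid : 3 * (δ : ℂ) * (a₁ * a₃ - μ * a₂ ^ 2) =
      a₁ * X - (4 * (A : ℂ) ^ 2 + 3 * (δ : ℂ) * μ) * a₂ ^ 2 := by
    linear_combination (-4 * a₂ ^ 2) * mul_conj' a₁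
  have htri : 3 * δ * ‖a₁ * a₃ - μ * a₂ ^ 2‖ ≤
      A * ‖X‖ + (4 * A ^ 2 + 3 * δ * ‖μ‖) * ‖a₂‖ ^ 2 := by
    have h3δ : ‖3 * (δ : ℂ)‖ = 3 * δ := by simp [abs_of_pos hδ]
    calc 3 * δ * ‖a₁ * a₃ - μ * a₂ ^ 2‖
      _ = ‖a₁ * X - (4 * (A : ℂ) ^ 2 + 3 * (δ : ℂ) * μ) * a₂ ^ 2‖ := by
          rw [← hid, norm_mul, h3δ]
      _ ≤ ‖a₁ * X‖ + ‖(4 * (A : ℂ) ^ 2 + 3 * (δ : ℂ) * μ) * a₂ ^ 2‖ := norm_sub_le _ _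
      _ ≤ A * ‖X‖ + (4 * A ^ 2 + 3 * δ * ‖μ‖) * ‖a₂‖ ^ 2 := by
          rw [norm_mul, norm_mul, norm_pow]
          gcongr
          refine (norm_add_le _ _).trans_eq ?_
          simp [abs_of_pos hδ, A]
  have hμ' : 3 * δ * ‖μ‖ ≤ 4 * A * (1 - A) := by
    rw [le_div_iff₀ (by positivity)] at hμ
    nlinarith
  rw [← mul_le_mul_iff_of_pos_left (by positivity : (0 : ℝ) < 3 * δ)]
  nlinarith [mul_le_mul_of_nonneg_right hμ' (sq_nonneg ‖a₂‖)]

theorem stmt_14_general (ω : ℂ → ℂ) (c : ℕ → ℂ) (μ : ℂ)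
    (hb : ∀ z ∈ ball (0:ℂ) 1, ‖deriv ω z‖ ≤ 1)
    (hc : ∀ z ∈ ball (0:ℂ) 1, HasSum (fun n : ℕ => c (n + 1) * z ^ (n + 1)) (ω z))
    (h1 : ‖μ‖ ≤ (4/3) * ‖c 1‖ / (1 + ‖c 1‖)) :
    ‖c 1 * c 3 - μ * c 2^2‖ ≤ (1/3) * ‖c 1‖ * (1 - ‖c 1‖^2) := by
  have hω : HasFPowerSeriesOnBall ω (ofScalars ℂ (Function.update c 0 0)) 0 1 :=
    hasFPowerSeriesOnBall_ofScalars_of_hasSum one_pos fun z hz ↦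
      (hasSum_nat_add_iff' 1).mp (by simpa using hc z hz)
  have hcoeff (n : ℕ) : iteratedDeriv (n + 1) ω 0 = (n + 1)! * c (n + 1) := by
    simpa using hω.hasFPowerSeriesAt.iteratedDeriv_eq_factorial_mul (n + 1)
  set f := deriv ω
  have hball : eball (0 : ℂ) 1 = ball 0 1 := by simpa using eball_coe (x := (0 : ℂ)) (ε := 1)
  have hd : DifferentiableOn ℂ f (ball 0 1) := (hball ▸ hω.differentiableOn).deriv isOpen_ball
  have hf : MapsTo f (ball 0 1) (closedBall 0 1) := fun z hz ↦
    mem_closedBall_zero_iff.mpr (hb z hz)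
  have hf0 : f 0 = c 1 := by simpa using hcoeff 0
  have hf1 : deriv f 0 = 2 * c 2 := by simpa [iteratedDeriv_succ] using hcoeff 1
  have hf2 : deriv (deriv f) 0 = 6 * c 3 := by
    simpa [iteratedDeriv_succ, Nat.factorial, f] using hcoeff 2
  rcases (mem_closedBall_zero_iff.mp (hf (mem_ball_self one_pos))).lt_or_eq with hlt | heq
  · have hschur := norm_deriv_deriv_div_two_mul_add_conj_mul_sq_le hd hf hlt
    rw [hf0, hf1, hf2, show 6 * c 3 / 2 = 3 * c 3 by ring] at hschur
    exact norm_mul_sub_mul_sq_le (hf0 ▸ hlt) h1 hschur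
  · have hconst := eventuallyEq_const_of_norm_eq_one hd hf heq
    have hc2 : c 2 = 0 := by simpa [hconst.deriv_eq] using hf1.symm
    have hc3 : c 3 = 0 := by simpa [hconst.deriv.deriv_eq] using hf2.symm
    rw [hc2, hc3, ← hf0, heq]
    norm_num

theorem stmt_14 (ω : ℂ → ℂ) (c : ℕ → ℂ) (μ : ℂ)
    (hd : DifferentiableOn ℂ ω (ball 0 1))
    (h0 : ω 0 = 0)
    (hb : ∀ z ∈ ball (0:ℂ) 1, ‖deriv ω z‖ ≤ 1)
    (hc : ∀ z ∈ ball (0:ℂ) 1, HasSum (fun n : ℕ => c (n + 1) * z ^ (n + 1)) (ω z))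
    (h1 : ‖μ‖ ≤ (4/3) * ‖c 1‖ / (1 + ‖c 1‖)) :
    ‖c 1 * c 3 - μ * c 2^2‖ ≤ (1/3) * ‖c 1‖ * (1 - ‖c 1‖^2) :=
  stmt_14_general ω c μ hb hc h1
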